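/- Let G = (V, E) be a finite simple 2-edge-connected graph with |V| ≥ 3 and positive edge costs c, and let (G', c') be its inflated instance. If x' ∈ P_NC(G'), define x ∈ ℝ^E by x_e := x'_{e'}, where e' is the inter-clique edge of e, for each e ∈ E. Then x ∈ P_EC(G) and Σ_{e∈E} c_e x_e = Σ_{e'∈E'} c'_{e'} x'_{e'}. -/

import Mathlib

open scoped Classical
open Finset

namespace TwoNCTAP

variable {V : Type*}

/-- The graph `H` with the vertex `u` "deleted": all edges incident to `u` are removed,
so that `u` becomes an isolated vertex. -/
def delVert (H : SimpleGraph V) (u : V) : SimpleGraph V where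
  Adj a b := H.Adj a b ∧ a ≠ u ∧ b ≠ u
  symm := by constructor; rintro a b ⟨h, ha, hb⟩; exact ⟨h.symm, hb, ha⟩
  loopless := by constructor; rintro a ⟨h, -, -⟩; exact h.ne rfl

/-- The partition of `V ∖ {u}` into the vertex sets of the connected components
of `H − u`. -/
def compPartition (H : SimpleGraph V) (u : V) : Set (Set V) :=
  {S | ∃ v, v ≠ u ∧ S = {w | (delVert H u).Reachable v w}}

/-- `P` is a partition of the set `S`. -/
def IsPartitionOf (P : Set (Set V)) (S : Set V) : Prop :=
  (∀ B ∈ P, B.Nonempty) ∧ (∀ B ∈ P, B ⊆ S) ∧ ∀ v ∈ S, ∃! B : Set V, B ∈ P ∧ v ∈ B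

/-- An edge `e` crosses the partition `P` if its two endpoints lie in different blocks
of `P`. -/
def Crosses (P : Set (Set V)) (e : Sym2 V) : Prop :=
  ∃ v w, e = s(v, w) ∧ ∃ B ∈ P, ∃ C ∈ P, B ≠ C ∧ v ∈ B ∧ w ∈ C

/-- The edge `e` lies in the cut `δ(S)`: it has exactly one endpoint in `S`. -/
def inCut (S : Set V) (e : Sym2 V) : Prop :=
  ∃ a b, e = s(a, b) ∧ a ∈ S ∧ b ∉ S

/-- `G` is 2-edge-connected: it is connected and remains connected after deleting any
single edge. -/
def TwoEdgeConnected (G : SimpleGraph V) : Prop :=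
  G.Connected ∧ ∀ e ∈ G.edgeSet, (G.deleteEdges {e}).Connected

/-- The vertex set of the inflated instance: pairs `(v, e)` with `e ∈ E(G)` and
`v` an endpoint of `e`. -/
abbrev InflVert (G : SimpleGraph V) : Type _ :=
  {p : V × Sym2 V // p.2 ∈ G.edgeSet ∧ p.1 ∈ p.2}

/-- The inflated graph `G'`: `(v, e)` and `(w, f)` are adjacent iff they are distinct and
either `v = w` (a clique edge) or `e = f` (the inter-clique edge of `e`). -/
def Infl (G : SimpleGraph V) : SimpleGraph (InflVert G) where
  Adj a b := a ≠ b ∧ (a.val.1 = b.val.1 ∨ a.val.2 = b.val.2)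
  symm := by
    constructor
    rintro a b ⟨h1, h2 | h2⟩
    · exact ⟨h1.symm, Or.inl h2.symm⟩
    · exact ⟨h1.symm, Or.inr h2.symm⟩
  loopless := by constructor; rintro a ⟨h, -⟩; exact h rfl

/-- The graph `(V', F')` consisting of the clique edges only. -/
def cliqueGraph (G : SimpleGraph V) : SimpleGraph (InflVert G) where
  Adj a b := a ≠ b ∧ a.val.1 = b.val.1
  symm := by constructor; rintro a b ⟨h1, h2⟩; exact ⟨h1.symm, h2.symm⟩
  loopless := by constructor; rintro a ⟨h, -⟩; exact h rfl

variable [Fintype V]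

/-- The objective value `Σ_{e ∈ E(H)} c_e x_e` of `x` for costs `c` on the edges of `H`. -/
noncomputable def obj {W : Type*} [Fintype W] (H : SimpleGraph W) (c x : Sym2 W → ℝ) : ℝ :=
  ∑ e ∈ Finset.univ.filter (fun e : Sym2 W => e ∈ H.edgeSet), c e * x e

/-- The feasible region `P_EC(G)` of the cut LP relaxation of min-cost 2ECSS. -/
def PEC (G : SimpleGraph V) : Set (Sym2 V → ℝ) :=
  {x | (∀ e ∈ G.edgeSet, 0 ≤ x e ∧ x e ≤ 1) ∧
    ∀ S : Set V, S.Nonempty → S ≠ Set.univ →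
      (2 : ℝ) ≤ ∑ e ∈ Finset.univ.filter
          (fun e : Sym2 V => e ∈ G.edgeSet ∧ inCut S e), x e}

/-- The feasible region `P_NC(G')` of the partition LP relaxation of min-cost 2NCSS for
the inflated instance: `0 ≤ x ≤ 1`, the cut constraints, and for every `w ∈ V'` and every
partition `P` of `V' ∖ {w}` whose blocks are unions of vertex sets of connected
components of `(V', F') − w`, the partition constraint. -/
def PNC (G : SimpleGraph V) : Set (Sym2 (InflVert G) → ℝ) :=
  {x | (∀ f ∈ (Infl G).edgeSet, 0 ≤ x f ∧ x f ≤ 1) ∧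
    (∀ S : Set (InflVert G), S.Nonempty → S ≠ Set.univ →
      (2 : ℝ) ≤ ∑ f ∈ Finset.univ.filter
          (fun f : Sym2 (InflVert G) => f ∈ (Infl G).edgeSet ∧ inCut S f), x f) ∧
    ∀ (w : InflVert G) (P : Set (Set (InflVert G))),
      IsPartitionOf P {v | v ≠ w} →
      (∀ B ∈ compPartition (cliqueGraph G) w, ∃ C ∈ P, B ⊆ C) →
      (P.ncard : ℝ) - 1 ≤ ∑ f ∈ Finset.univ.filter
          (fun f : Sym2 (InflVert G) => f ∈ (Infl G).edgeSet ∧ Crosses P f), x f}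

/-!
Sending each vertex `(v, e)` of `G'` to `v` maps the inter-clique edges of `G'` bijectively onto
`E` and every clique edge to a loop. So for `∅ ≠ S ⊊ V` the cut of the preimage of `S` in `G'`
(again nonempty and proper, as the connected graph `G` has no isolated vertex) consists exactly
of the inter-clique edges over `δ_G(S)`, and its `x'`-value is `x(δ_G(S))`. Likewise the costs
agree because clique edges cost nothing.
-/

end TwoNCTAP

namespace TwoNCTAP

variable {V : Type*}

theorem inCut_mk_iff {α : Type*} {S : Set α} {v w : α} :
    inCut S s(v, w) ↔ (v ∈ S ∧ w ∉ S) ∨ (w ∈ S ∧ v ∉ S) := by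
  constructor
  · rintro ⟨a, b, heq, ha, hb⟩
    rcases Sym2.eq_iff.mp heq with ⟨rfl, rfl⟩ | ⟨rfl, rfl⟩
    exacts [Or.inl ⟨ha, hb⟩, Or.inr ⟨ha, hb⟩]
  · rintro (⟨hv, hw⟩ | ⟨hw, hv⟩)
    exacts [⟨v, w, rfl, hv, hw⟩, ⟨w, v, Sym2.eq_swap, hw, hv⟩]

theorem inCut_preimage_iff {α β : Type*} (π : α → β) (S : Set β) (f : Sym2 α) :
    inCut (π ⁻¹' S) f ↔ inCut S (f.map π) := by
  induction f using Sym2.ind with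
  | _ a b => simp only [inCut_mk_iff, Sym2.map_mk, Set.mem_preimage]

theorem not_inCut_of_isDiag {α : Type*} {S : Set α} {e : Sym2 α} (he : e.IsDiag) :
    ¬ inCut S e := by
  induction e using Sym2.ind with
  | _ a b => rw [Sym2.mk_isDiag_iff.mp he, inCut_mk_iff]; tauto

def interCliqueGraph (G : SimpleGraph V) : SimpleGraph (InflVert G) where
  Adj a b := a ≠ b ∧ a.val.2 = b.val.2
  symm := by constructor; rintro a b ⟨h1, h2⟩; exact ⟨h1.symm, h2.symm⟩
  loopless := by constructor; rintro a ⟨h, -⟩; exact h rfl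

theorem infl_eq_sup (G : SimpleGraph V) : Infl G = cliqueGraph G ⊔ interCliqueGraph G := by
  ext a b
  simp only [Infl, cliqueGraph, interCliqueGraph, SimpleGraph.sup_adj, and_or_left]

theorem interCliqueGraph_le_infl (G : SimpleGraph V) : interCliqueGraph G ≤ Infl G :=
  infl_eq_sup G ▸ le_sup_right

section Inflation

variable {G : SimpleGraph V}

def baseEdge (f : Sym2 (InflVert G)) : Sym2 V :=
  f.map fun q => q.val.1

@[simp]
theorem baseEdge_mk (a b : InflVert G) : baseEdge s(a, b) = s(a.val.1, b.val.1) := rfl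

theorem inCut_preimage_fst_iff (S : Set V) (f : Sym2 (InflVert G)) :
    inCut {q : InflVert G | q.val.1 ∈ S} f ↔ inCut S (baseEdge f) :=
  inCut_preimage_iff _ S f

theorem isDiag_baseEdge_of_mem_cliqueGraph {f : Sym2 (InflVert G)}
    (hf : f ∈ (cliqueGraph G).edgeSet) : (baseEdge f).IsDiag := by
  induction f using Sym2.ind with
  | _ a b => exact Sym2.mk_isDiag_iff.mpr hf.2

theorem baseEdge_mk_of_interCliqueGraph_adj {a b : InflVert G}
    (h : (interCliqueGraph G).Adj a b) : baseEdge s(a, b) = a.val.2 := by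
  obtain ⟨hne, h2⟩ := h
  have h1 : a.val.1 ≠ b.val.1 := fun h1 => hne (Subtype.ext (Prod.ext h1 h2))
  exact ((Sym2.mem_and_mem_iff h1).mp ⟨a.prop.2, h2 ▸ b.prop.2⟩).symm

theorem baseEdge_mem_edgeSet {f : Sym2 (InflVert G)} (hf : f ∈ (interCliqueGraph G).edgeSet) :
    baseEdge f ∈ G.edgeSet := by
  induction f using Sym2.ind with
  | _ a b => exact baseEdge_mk_of_interCliqueGraph_adj hf ▸ a.prop.1

theorem injOn_baseEdge : Set.InjOn baseEdge (interCliqueGraph G).edgeSet := by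
  intro f hf g hg hfg
  induction f using Sym2.ind with | _ a b =>
  induction g using Sym2.ind with | _ c d =>
  have hac : a.val.2 = c.val.2 := by
    rw [← baseEdge_mk_of_interCliqueGraph_adj hf, ← baseEdge_mk_of_interCliqueGraph_adj hg, hfg]
  have hbd : b.val.2 = d.val.2 := hf.2 ▸ hg.2 ▸ hac
  simp only [baseEdge_mk, Sym2.eq_iff] at hfg ⊢
  rcases hfg with ⟨h1, h2⟩ | ⟨h1, h2⟩
  · exact Or.inl ⟨Subtype.ext (Prod.ext h1 hac), Subtype.ext (Prod.ext h2 hbd)⟩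
  · exact Or.inr ⟨Subtype.ext (Prod.ext h1 (hac.trans hg.2)),
      Subtype.ext (Prod.ext h2 (hf.2 ▸ hac))⟩

theorem surjOn_baseEdge : Set.SurjOn baseEdge (interCliqueGraph G).edgeSet G.edgeSet := by
  intro e he
  induction e using Sym2.ind with
  | _ v w =>
    let a : InflVert G := ⟨(v, s(v, w)), he, Sym2.mem_mk_left _ _⟩
    let b : InflVert G := ⟨(w, s(v, w)), he, Sym2.mem_mk_right _ _⟩
    have hab : a ≠ b := fun h => G.ne_of_adj he (congrArg (fun q => q.val.1) h)
    exact ⟨s(a, b), ⟨hab, rfl⟩, rfl⟩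

theorem apply_baseEdge_eq {M : Type*} {F : Sym2 V → M} {F' : Sym2 (InflVert G) → M}
    (h : ∀ a b : InflVert G, a ≠ b → a.val.2 = b.val.2 → F a.val.2 = F' s(a, b))
    {f : Sym2 (InflVert G)} (hf : f ∈ (interCliqueGraph G).edgeSet) : F (baseEdge f) = F' f := by
  induction f using Sym2.ind with
  | _ a b => rw [baseEdge_mk_of_interCliqueGraph_adj hf]; exact h a b hf.1 hf.2

theorem inflVert_fst_surjective (hG : G.Connected) [Nontrivial V] :
    Function.Surjective fun q : InflVert G => q.val.1 := by
  intro v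
  obtain ⟨w, hvw⟩ := hG.preconnected.exists_adj_of_nontrivial v
  exact ⟨⟨(v, s(v, w)), hvw, Sym2.mem_mk_left _ _⟩, rfl⟩

variable [Fintype V]

theorem sum_filter_interCliqueGraph_baseEdge {M : Type*} [AddCommMonoid M] (p : Sym2 V → Prop)
    (g : Sym2 V → M) :
    ∑ f ∈ univ.filter (fun f : Sym2 (InflVert G) =>
        f ∈ (interCliqueGraph G).edgeSet ∧ p (baseEdge f)), g (baseEdge f)
      = ∑ e ∈ univ.filter (fun e : Sym2 V => e ∈ G.edgeSet ∧ p e), g e := by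
  refine Finset.sum_nbij baseEdge ?_ ?_ ?_ (fun _ _ => rfl)
  · simp only [mem_filter, mem_univ, true_and]
    exact fun f ⟨hf, hp⟩ => ⟨baseEdge_mem_edgeSet hf, hp⟩
  · exact injOn_baseEdge.mono fun f hf => (mem_filter.mp hf).2.1
  · rintro e he
    simp only [coe_filter, mem_univ, true_and] at he
    obtain ⟨f, hf, rfl⟩ := surjOn_baseEdge he.1
    exact ⟨f, by simpa using ⟨hf, he.2⟩, rfl⟩

/-- Clique edges project to loops, which cross no cut. -/
theorem sum_inCut_preimage_fst {x : Sym2 V → ℝ} {x' : Sym2 (InflVert G) → ℝ}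
    (hxdef : ∀ a b : InflVert G, a ≠ b → a.val.2 = b.val.2 → x a.val.2 = x' s(a, b))
    (S : Set V) :
    ∑ f ∈ univ.filter (fun f : Sym2 (InflVert G) =>
        f ∈ (Infl G).edgeSet ∧ inCut {q : InflVert G | q.val.1 ∈ S} f), x' f
      = ∑ e ∈ univ.filter (fun e : Sym2 V => e ∈ G.edgeSet ∧ inCut S e), x e := by
  have hcut : ∀ f : Sym2 (InflVert G),
      f ∈ (Infl G).edgeSet ∧ inCut {q : InflVert G | q.val.1 ∈ S} f ↔
        f ∈ (interCliqueGraph G).edgeSet ∧ inCut S (baseEdge f) := by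
    intro f
    rw [inCut_preimage_fst_iff, infl_eq_sup, SimpleGraph.edgeSet_sup, Set.mem_union]
    constructor
    · rintro ⟨hcl | hic, hf⟩
      · exact absurd hf (not_inCut_of_isDiag (isDiag_baseEdge_of_mem_cliqueGraph hcl))
      · exact ⟨hic, hf⟩
    · rintro ⟨hic, hf⟩
      exact ⟨Or.inr hic, hf⟩
  rw [Finset.filter_congr fun f _ => hcut f]
  refine (Finset.sum_congr rfl fun f hf => ?_).trans
    (sum_filter_interCliqueGraph_baseEdge (inCut S) x)
  exact (apply_baseEdge_eq hxdef (mem_filter.mp hf).2.1).symm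

theorem mem_PEC_of_mem_PNC (hG : G.Connected) {x' : Sym2 (InflVert G) → ℝ} (hx' : x' ∈ PNC G)
    {x : Sym2 V → ℝ}
    (hxdef : ∀ a b : InflVert G, a ≠ b → a.val.2 = b.val.2 → x a.val.2 = x' s(a, b)) :
    x ∈ PEC G := by
  obtain ⟨hbound, hcut, -⟩ := hx'
  refine ⟨fun e he => ?_, fun S hS hSu => ?_⟩
  · obtain ⟨f, hf, rfl⟩ := surjOn_baseEdge he
    rw [apply_baseEdge_eq hxdef hf]
    exact hbound f (SimpleGraph.edgeSet_mono (interCliqueGraph_le_infl G) hf)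
  · obtain ⟨v, hv⟩ := hS
    obtain ⟨u, hu⟩ := (Set.ne_univ_iff_exists_notMem S).mp hSu
    have : Nontrivial V := nontrivial_of_ne v u (by rintro rfl; exact hu hv)
    have hfst := inflVert_fst_surjective (G := G) hG
    rw [← sum_inCut_preimage_fst hxdef]
    exact hcut _ (Set.Nonempty.preimage ⟨v, hv⟩ hfst)
      fun h => hSu (hfst.preimage_injective (h.trans Set.preimage_univ.symm))

theorem obj_eq_obj_infl {c x : Sym2 V → ℝ} {c' x' : Sym2 (InflVert G) → ℝ}
    (hc'cl : ∀ a b : InflVert G, a ≠ b → a.val.1 = b.val.1 → c' s(a, b) = 0)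
    (hc'in : ∀ a b : InflVert G, a ≠ b → a.val.2 = b.val.2 → c' s(a, b) = c a.val.2)
    (hxdef : ∀ a b : InflVert G, a ≠ b → a.val.2 = b.val.2 → x a.val.2 = x' s(a, b)) :
    obj G c x = obj (Infl G) c' x' := by
  have hclique : ∀ f ∈ (cliqueGraph G).edgeSet, c' f * x' f = 0 := by
    intro f hf
    induction f using Sym2.ind with
    | _ a b => rw [hc'cl a b hf.1 hf.2, zero_mul]
  calc obj G c x
      = ∑ f ∈ univ.filter (· ∈ (interCliqueGraph G).edgeSet), c' f * x' f := by
        have h := sum_filter_interCliqueGraph_baseEdge (G := G) (fun _ => True) fun e => c e * x e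
        simp only [and_true] at h
        rw [obj, ← h]
        refine Finset.sum_congr rfl fun f hf => ?_
        rw [mem_filter] at hf
        rw [apply_baseEdge_eq (fun a b hab h2 => (hc'in a b hab h2).symm) hf.2,
          apply_baseEdge_eq hxdef hf.2]
    _ = obj (Infl G) c' x' := by
        refine Finset.sum_subset (fun f hf => ?_) fun f hf hnf => hclique f ?_
        · simp only [mem_filter, mem_univ, true_and] at hf ⊢
          exact SimpleGraph.edgeSet_mono (interCliqueGraph_le_infl G) hf
        · simp only [mem_filter, mem_univ, true_and, infl_eq_sup, SimpleGraph.edgeSet_sup,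
            Set.mem_union] at hf hnf
          exact hf.resolve_right hnf

end Inflation

variable [Fintype V]

theorem inflation_NC_to_EC_general
    (G : SimpleGraph V) (h2ec : TwoEdgeConnected G)
    (c : Sym2 V → ℝ)
    (c' : Sym2 (InflVert G) → ℝ)
    (hc'cl : ∀ a b : InflVert G, a ≠ b → a.val.1 = b.val.1 → c' s(a, b) = 0)
    (hc'in : ∀ a b : InflVert G, a ≠ b → a.val.2 = b.val.2 → c' s(a, b) = c a.val.2)
    (x' : Sym2 (InflVert G) → ℝ) (hx' : x' ∈ PNC G)
    (x : Sym2 V → ℝ)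
    (hxdef : ∀ a b : InflVert G, a ≠ b → a.val.2 = b.val.2 → x a.val.2 = x' s(a, b)) :
    x ∈ PEC G ∧ obj G c x = obj (Infl G) c' x' :=
  ⟨mem_PEC_of_mem_PNC h2ec.1 hx' hxdef, obj_eq_obj_infl hc'cl hc'in hxdef⟩

/-- Let `G` be 2-edge-connected with positive edge costs `c`, and let
`(G', c')` be its inflated instance. If `x' ∈ P_NC(G')` and `x` is obtained from `x'` by
putting `x_e := x'_{e'}` for the inter-clique edge `e'` of each `e ∈ E`, then
`x ∈ P_EC(G)` and the two objective values agree. -/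
theorem inflation_NC_to_EC
    (G : SimpleGraph V) (hV : 3 ≤ Fintype.card V) (h2ec : TwoEdgeConnected G)
    (c : Sym2 V → ℝ) (hc : ∀ e ∈ G.edgeSet, 0 < c e)
    (c' : Sym2 (InflVert G) → ℝ)
    (hc'cl : ∀ a b : InflVert G, a ≠ b → a.val.1 = b.val.1 → c' s(a, b) = 0)
    (hc'in : ∀ a b : InflVert G, a ≠ b → a.val.2 = b.val.2 → c' s(a, b) = c a.val.2)
    (x' : Sym2 (InflVert G) → ℝ) (hx' : x' ∈ PNC G)
    (x : Sym2 V → ℝ)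
    (hxdef : ∀ a b : InflVert G, a ≠ b → a.val.2 = b.val.2 → x a.val.2 = x' s(a, b)) :
    x ∈ PEC G ∧ obj G c x = obj (Infl G) c' x' :=
  inflation_NC_to_EC_general G h2ec c c' hc'cl hc'in x' hx' x hxdef

end TwoNCTAP
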